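/- arXiv:math/0412277 — 2 statements merged into one kernel-verified Lean document; each statement's English description precedes it below -/
import Mathlib

section
/- For a,b ∈ ℝ with a ≤ b, the space 𝒮(ℝ₊ˣ)_{[a,b]} := ⋂_{s ∈ [a,b]} 𝒮(ℝ₊ˣ)_s equals 𝒮(ℝ₊ˣ)_a ∩ 𝒮(ℝ₊ˣ)_b. -/
open Real Set

noncomputable def baseFn (c d : ℝ) (m : ℕ) : ℝ → ℝ :=
  fun t => Real.exp (c * t) * ((1 + Real.exp (d * t))⁻¹) ^ m

inductive InA (d : ℝ) : (ℝ → ℝ) → Prop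
  | base (c : ℝ) (m : ℕ) (hc0 : 0 ≤ c) (hcm : c ≤ m * d) : InA d (baseFn c d m)
  | add {f g : ℝ → ℝ} : InA d f → InA d g → InA d (fun t => f t + g t)
  | smul (a : ℝ) {f : ℝ → ℝ} : InA d f → InA d (fun t => a * f t)

lemma one_add_exp_pos (x : ℝ) : 0 < 1 + Real.exp x := by positivity

lemma baseFn_bound {c d : ℝ} {m : ℕ} (hc0 : 0 ≤ c) (hcm : c ≤ m * d) (t : ℝ) :
    |baseFn c d m t| ≤ 1 := by
  have h1 : 0 < (1 + Real.exp (d * t)) ^ m := pow_pos (one_add_exp_pos _) m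
  have key : Real.exp (c * t) ≤ (1 + Real.exp (d * t)) ^ m := by
    rcases le_or_gt t 0 with ht | ht
    · calc Real.exp (c * t) ≤ Real.exp 0 := Real.exp_le_exp.2 (mul_nonpos_of_nonneg_of_nonpos hc0 ht)
        _ = 1 := Real.exp_zero
        _ ≤ (1 + Real.exp (d * t)) ^ m := one_le_pow₀ (by nlinarith [Real.exp_pos (d*t)])
    · calc Real.exp (c * t) ≤ Real.exp ((m * d) * t) :=
            Real.exp_le_exp.2 (mul_le_mul_of_nonneg_right hcm ht.le)
        _ = (Real.exp (d * t)) ^ m := by rw [← Real.exp_nat_mul]; ring_nf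
        _ ≤ (1 + Real.exp (d * t)) ^ m :=
              pow_le_pow_left₀ (Real.exp_pos _).le (by linarith) m
  have heq : baseFn c d m t = Real.exp (c * t) / (1 + Real.exp (d * t)) ^ m := by
    rw [baseFn, inv_pow, div_eq_mul_inv]
  rw [heq, abs_of_nonneg (by positivity)]
  exact div_le_one_of_le₀ key h1.le

lemma InA.bound {d : ℝ} {h : ℝ → ℝ} (H : InA d h) : ∃ C, ∀ t, |h t| ≤ C := by
  induction H with
  | base c m hc0 hcm => exact ⟨1, baseFn_bound hc0 hcm⟩
  | add hf hg ihf ihg =>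
      obtain ⟨C1, h1⟩ := ihf; obtain ⟨C2, h2⟩ := ihg
      exact ⟨C1 + C2, fun t => (abs_add_le _ _).trans (add_le_add (h1 t) (h2 t))⟩
  | smul a hf ih =>
      obtain ⟨C, h1⟩ := ih
      exact ⟨|a| * C, fun t => by rw [abs_mul]; exact mul_le_mul_of_nonneg_left (h1 t) (abs_nonneg a)⟩

lemma InA.contDiff {d : ℝ} {h : ℝ → ℝ} (H : InA d h) : ContDiff ℝ (⊤ : ℕ∞) h := by
  induction H with
  | base c m hc0 hcm =>
      refine (Real.contDiff_exp.comp (contDiff_const.mul contDiff_id)).mul (ContDiff.pow ?_ m)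
      exact ((contDiff_const.add (Real.contDiff_exp.comp (contDiff_const.mul contDiff_id))).inv
        (fun t => (one_add_exp_pos (d * t)).ne'))
  | add hf hg ihf ihg => exact ihf.add ihg
  | smul a hf ih => exact contDiff_const.mul ih

lemma baseFn_hasDerivAt (c d : ℝ) (m : ℕ) (t : ℝ) :
    HasDerivAt (baseFn c d m)
      ((c - m * d) * baseFn c d m t + (m * d) * baseFn c d (m + 1) t) t := by
  set u : ℝ → ℝ := fun t => (1 + Real.exp (d * t))⁻¹ with hu
  have hne : (1 + Real.exp (d * t)) ≠ 0 := (one_add_exp_pos _).ne'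
  have hexp : HasDerivAt (fun t => Real.exp (d * t)) (d * Real.exp (d * t)) t := by
    simpa [mul_comm, Function.comp_def] using (Real.hasDerivAt_exp (d * t)).comp t ((hasDerivAt_id t).const_mul d)
  have hu' : HasDerivAt u (-(d * Real.exp (d * t)) * (u t) ^ 2) t := by
    simpa [hu, sq, div_eq_mul_inv, mul_assoc, Pi.add_def, Pi.inv_def] using ((hasDerivAt_const t (1:ℝ)).add hexp).inv hne
  have hpow : HasDerivAt (fun t => (u t) ^ m)
      ((m : ℝ) * (u t) ^ (m - 1) * (-(d * Real.exp (d * t)) * (u t) ^ 2)) t := hu'.pow m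
  have hec : HasDerivAt (fun t => Real.exp (c * t)) (c * Real.exp (c * t)) t := by
    simpa [mul_comm, Function.comp_def] using (Real.hasDerivAt_exp (c * t)).comp t ((hasDerivAt_id t).const_mul c)
  have hmul := hec.mul hpow
  refine hmul.congr_deriv (Eq.symm ?_)
  have hkey : Real.exp (d * t) * u t = 1 - u t := by
    have := mul_inv_cancel₀ hne; simp only [hu]; linear_combination this
  cases m with
  | zero => simp [baseFn]
  | succ k =>
      have h2 : Real.exp (d * t) * u t ^ (k + 2) = u t ^ (k + 1) - u t ^ (k + 2) := by
        calc Real.exp (d * t) * u t ^ (k + 2) = (Real.exp (d * t) * u t) * u t ^ (k + 1) := by ring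
          _ = (1 - u t) * u t ^ (k + 1) := by rw [hkey]
          _ = u t ^ (k + 1) - u t ^ (k + 2) := by ring
      simp only [baseFn, ← hu, Nat.add_sub_cancel]
      push_cast
      linear_combination ((k : ℝ) + 1) * d * Real.exp (c * t) * h2

lemma InA.hasDerivAt' {d : ℝ} (hd : 0 ≤ d) {h : ℝ → ℝ} (H : InA d h) :
    ∃ h', InA d h' ∧ ∀ t, HasDerivAt h (h' t) t := by
  induction H with
  | base c m hc0 hcm =>
      refine ⟨fun t => (c - m * d) * baseFn c d m t + (m * d) * baseFn c d (m + 1) t,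
        InA.add (InA.smul _ (InA.base c m hc0 hcm))
          (InA.smul _ (InA.base c (m + 1) hc0 (hcm.trans (by push_cast; nlinarith)))),
        fun t => baseFn_hasDerivAt c d m t⟩
  | add hf hg ihf ihg =>
      obtain ⟨f', hf', hdf⟩ := ihf; obtain ⟨g', hg', hdg⟩ := ihg
      exact ⟨fun t => f' t + g' t, hf'.add hg', fun t => (hdf t).add (hdg t)⟩
  | smul a hf ih =>
      obtain ⟨f', hf', hdf⟩ := ih
      exact ⟨fun t => a * f' t, InA.smul a hf', fun t => (hdf t).const_mul a⟩

lemma InA.deriv_mem {d : ℝ} (hd : 0 ≤ d) {h : ℝ → ℝ} (H : InA d h) : InA d (deriv h) := by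
  obtain ⟨h', Hh', hder⟩ := H.hasDerivAt' hd
  have : deriv h = h' := funext fun t => (hder t).deriv
  rwa [this]

lemma InA.iteratedDeriv_mem {d : ℝ} (hd : 0 ≤ d) {h : ℝ → ℝ} (H : InA d h) (n : ℕ) :
    InA d (iteratedDeriv n h) := by
  induction n with
  | zero => simpa using H
  | succ n ih => rw [iteratedDeriv_succ]; exact ih.deriv_mem hd

lemma InA.temperate {d : ℝ} (hd : 0 ≤ d) {h : ℝ → ℝ} (H : InA d h) :
    Function.HasTemperateGrowth h := by
  refine ⟨H.contDiff.of_le (mod_cast le_top), fun n => ?_⟩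
  obtain ⟨C, hC⟩ := (H.iteratedDeriv_mem hd n).bound
  refine ⟨0, C, fun x => ?_⟩
  simpa [norm_iteratedFDeriv_eq_norm_iteratedDeriv, Real.norm_eq_abs] using hC x

/-- `f ∈ 𝒮(ℝ₊ˣ)_s`: the function `x ↦ f x · x^s` is Schwartz on the multiplicative
group `(0,∞) ≅ ℝ` (via `ln`). -/
def MemWS (s : ℝ) (f : {x : ℝ // 0 < x} → ℂ) : Prop :=
  ∃ φ : SchwartzMap ℝ ℂ,
    ∀ t : ℝ, φ t = f ⟨Real.exp t, Real.exp_pos t⟩ * ((Real.exp t ^ s : ℝ) : ℂ)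

/-- `𝒮(ℝ₊ˣ)_{[a,b]} = ⋂_{s ∈ [a,b]} 𝒮(ℝ₊ˣ)_s` equals `𝒮(ℝ₊ˣ)_a ∩ 𝒮(ℝ₊ˣ)_b`. -/
theorem memWS_Icc_iff (a b : ℝ) (hab : a ≤ b) (f : {x : ℝ // 0 < x} → ℂ) :
    (∀ s ∈ Set.Icc a b, MemWS s f) ↔ (MemWS a f ∧ MemWS b f) := by
  constructor
  · intro h
    exact ⟨h a ⟨le_refl a, hab⟩, h b ⟨hab, le_refl b⟩⟩
  · rintro ⟨⟨φa, ha⟩, ⟨φb, hb⟩⟩ s hs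
    have hd : (0:ℝ) ≤ b - a := by linarith
    have hInA : InA (b - a) (baseFn (s - a) (b - a) 1) :=
      InA.base (s - a) 1 (by linarith [hs.1]) (by push_cast; linarith [hs.2])
    have hg : Function.HasTemperateGrowth (baseFn (s - a) (b - a) 1) := hInA.temperate hd
    let B : ℂ →L[ℝ] ℝ →L[ℝ] ℂ := (ContinuousLinearMap.lsmul ℝ ℝ : ℝ →L[ℝ] ℂ →L[ℝ] ℂ).flip
    refine ⟨SchwartzMap.bilinLeftCLM B hg (φa + φb), fun t => ?_⟩
    have happ : (SchwartzMap.bilinLeftCLM B hg (φa + φb)) t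
        = (baseFn (s - a) (b - a) 1 t) • ((φa + φb) t) := rfl
    have hpow : ∀ r : ℝ, Real.exp t ^ r = Real.exp (t * r) := fun r => by
      rw [← Real.exp_mul]
    have key : (baseFn (s - a) (b - a) 1 t) * (Real.exp (t * a) + Real.exp (t * b))
        = Real.exp (t * s) := by
      simp only [baseFn, pow_one]
      have hne : (1 + Real.exp ((b - a) * t)) ≠ 0 := (one_add_exp_pos _).ne'
      have e1 : Real.exp ((s - a) * t) * Real.exp (t * a) = Real.exp (t * s) := by
        rw [← Real.exp_add]; congr 1; ring
      have e2 : Real.exp ((s - a) * t) * Real.exp (t * b)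
          = Real.exp (t * s) * Real.exp ((b - a) * t) := by
        rw [← Real.exp_add, ← Real.exp_add]; congr 1; ring
      field_simp
      ring_nf at e1 e2 ⊢; linear_combination e1 + e2
    rw [happ]
    simp only [SchwartzMap.add_apply, ha t, hb t, hpow]
    have key' := congrArg (Complex.ofReal) key
    push_cast at key' ⊢
    rw [Complex.real_smul]
    push_cast
    linear_combination (f ⟨Real.exp t, Real.exp_pos t⟩) * key'
end

section
/- The Zeta operator satisfies the Euler product: for s > 1, as operators on L²((0,∞), x^{2s} dx/x), Z = ∏_{p prime} (1 - λ_{p}^{-1})⁻¹, where λ_p⁻¹ f(x) = f(px), and the product converges absolutely in operator norm. -/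
open MeasureTheory Set Real Filter

/-- The measure `x^{2s} dx/x = x^{2s-1} dx` on `(0,∞)`. -/
noncomputable def wMeasure (s : ℝ) : Measure ℝ :=
  (volume.restrict (Ioi (0 : ℝ))).withDensity fun x => ENNReal.ofReal (x ^ (2 * s - 1))

open scoped ENNReal NNReal

set_option maxHeartbeats 1000000
set_option synthInstance.maxHeartbeats 400000

namespace ZetaEulerAux

lemma map_withDensity_comp {T : ℝ → ℝ} (hT : Measurable T) (ν : Measure ℝ)
    {u : ℝ → ℝ≥0∞} (hu : Measurable u) :
    Measure.map T (ν.withDensity (u ∘ T)) = (Measure.map T ν).withDensity u := by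
  ext A hA
  rw [Measure.map_apply hT hA, withDensity_apply _ (hT hA), withDensity_apply _ hA,
    setLIntegral_map hA hu hT]
  rfl

lemma map_wMeasure {s t : ℝ} (ht : 0 < t) :
    Measure.map (fun x => t * x) (wMeasure s)
      = ENNReal.ofReal (t ^ (-(2 * s))) • wMeasure s := by
  have ht' : (0:ℝ) < t⁻¹ := inv_pos.2 ht
  set u : ℝ → ℝ≥0∞ := fun y => ENNReal.ofReal ((t⁻¹ * y) ^ (2 * s - 1)) with hu_def
  have hu : Measurable u := by
    fun_prop
  have h1 : wMeasure s
      = (volume.restrict (Ioi (0:ℝ))).withDensity (u ∘ fun x => t * x) := by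
    unfold wMeasure
    congr 1
    funext x
    simp only [u, Function.comp, inv_mul_cancel_left₀ ht.ne']
  have h2 : Measure.map (fun x => t * x) (volume.restrict (Ioi (0:ℝ)))
      = ENNReal.ofReal t⁻¹ • volume.restrict (Ioi (0:ℝ)) := by
    have hpre : (fun x => t * x) ⁻¹' (Ioi (0:ℝ)) = Ioi 0 := by
      ext x; simp [mul_pos_iff_of_pos_left, ht]
    rw [← hpre, ← Measure.restrict_map (by fun_prop) measurableSet_Ioi,
      Real.map_volume_mul_left ht.ne', Measure.restrict_smul, hpre, abs_of_pos ht']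
  have h3 : (volume.restrict (Ioi (0:ℝ))).withDensity u
      = ENNReal.ofReal (t⁻¹ ^ (2 * s - 1)) • wMeasure s := by
    unfold wMeasure
    rw [← withDensity_smul _ (by fun_prop)]
    apply withDensity_congr_ae
    filter_upwards [ae_restrict_mem measurableSet_Ioi] with x hx
    simp only [u, Pi.smul_apply, smul_eq_mul]
    rw [Real.mul_rpow ht'.le (le_of_lt hx), ENNReal.ofReal_mul (by positivity)]
  calc Measure.map (fun x => t * x) (wMeasure s)
      = (ENNReal.ofReal t⁻¹ • volume.restrict (Ioi (0:ℝ))).withDensity u := by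
        rw [h1, map_withDensity_comp (by fun_prop) _ hu, h2]
    _ = ENNReal.ofReal t⁻¹ • (volume.restrict (Ioi (0:ℝ))).withDensity u := by
        rw [withDensity_smul_measure]
    _ = (ENNReal.ofReal t⁻¹ * ENNReal.ofReal (t⁻¹ ^ (2 * s - 1))) • wMeasure s := by
        rw [h3, smul_smul]
    _ = ENNReal.ofReal (t ^ (-(2 * s))) • wMeasure s := by
        congr 1
        rw [← ENNReal.ofReal_mul (by positivity)]
        congr 1
        have h4 := Real.rpow_add ht' 1 (2 * s - 1)
        rw [Real.rpow_one] at h4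
        rw [← h4, Real.inv_rpow ht.le, ← Real.rpow_neg ht.le]
        ring_nf

end ZetaEulerAux

namespace ZetaEulerAux2
open ZetaEulerAux

variable {s : ℝ}

lemma qmp {t : ℝ} (ht : 0 < t) :
    Measure.QuasiMeasurePreserving (fun x : ℝ => t * x) (wMeasure s) (wMeasure s) := by
  refine ⟨by fun_prop, ?_⟩
  rw [map_wMeasure ht]
  exact Measure.smul_absolutelyContinuous

lemma asm_map {t : ℝ} (ht : 0 < t) {g : ℝ → ℂ} (hg : AEStronglyMeasurable g (wMeasure s)) :
    AEStronglyMeasurable g (Measure.map (fun x : ℝ => t * x) (wMeasure s)) := by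
  rw [map_wMeasure ht]
  exact hg.mono_ac Measure.smul_absolutelyContinuous

lemma eLpNorm_comp_mul {t : ℝ} (ht : 0 < t) {g : ℝ → ℂ}
    (hg : AEStronglyMeasurable g (wMeasure s)) :
    eLpNorm (fun x => g (t * x)) 2 (wMeasure s)
      = ENNReal.ofReal (t ^ (-s)) * eLpNorm g 2 (wMeasure s) := by
  have h1 := eLpNorm_map_measure (p := 2) (asm_map ht hg)
    ((measurable_const_mul t).aemeasurable : AEMeasurable (fun x : ℝ => t * x) (wMeasure s))
  rw [map_wMeasure ht, eLpNorm_smul_measure_of_ne_zero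
    (by simp [ENNReal.ofReal_eq_zero, not_le]; positivity)] at h1
  rw [show (fun x => g (t * x)) = g ∘ (fun x : ℝ => t * x) from rfl, ← h1, smul_eq_mul]
  congr 1
  have h2 : ((1 : ℝ≥0∞) / 2).toReal = (2 : ℝ)⁻¹ := by norm_num
  rw [h2, ENNReal.ofReal_rpow_of_pos (by positivity), ← Real.rpow_mul ht.le]
  norm_num
  ring_nf

lemma memLp_comp_mul {t : ℝ} (ht : 0 < t) {g : ℝ → ℂ} (hg : MemLp g 2 (wMeasure s)) :
    MemLp (fun x => g (t * x)) 2 (wMeasure s) := by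
  have := (memLp_map_measure_iff (asm_map ht hg.1)
    ((measurable_const_mul t).aemeasurable : AEMeasurable (fun x : ℝ => t * x) (wMeasure s))).1
    (by rw [map_wMeasure ht]; exact hg.smul_measure ENNReal.ofReal_ne_top)
  exact this

end ZetaEulerAux2

namespace ZetaEulerAux3
open ZetaEulerAux ZetaEulerAux2

variable {s : ℝ}

noncomputable def opL (s : ℝ) {t : ℝ} (ht : 0 < t) :
    Lp ℂ 2 (wMeasure s) →ₗ[ℂ] Lp ℂ 2 (wMeasure s) where
  toFun f := (memLp_comp_mul ht (Lp.memLp f)).toLp _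
  map_add' f g := by
    apply Lp.ext
    filter_upwards [MemLp.coeFn_toLp (memLp_comp_mul ht (Lp.memLp (f + g))),
      MemLp.coeFn_toLp (memLp_comp_mul ht (Lp.memLp f)),
      MemLp.coeFn_toLp (memLp_comp_mul ht (Lp.memLp g)),
      Lp.coeFn_add ((memLp_comp_mul ht (Lp.memLp f)).toLp _)
        ((memLp_comp_mul ht (Lp.memLp g)).toLp _),
      (qmp ht).ae_eq_comp (Lp.coeFn_add f g)] with x h1 h2 h3 h4 h5
    rw [h1, h4, Pi.add_apply, h2, h3]
    exact h5
  map_smul' c f := by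
    apply Lp.ext
    filter_upwards [MemLp.coeFn_toLp (memLp_comp_mul ht (Lp.memLp (c • f))),
      MemLp.coeFn_toLp (memLp_comp_mul ht (Lp.memLp f)),
      Lp.coeFn_smul c ((memLp_comp_mul ht (Lp.memLp f)).toLp _),
      (qmp ht).ae_eq_comp (Lp.coeFn_smul c f)] with x h1 h2 h3 h4
    rw [h1, RingHom.id_apply, h3, Pi.smul_apply, h2]
    exact h4

lemma opL_norm (s : ℝ) {t : ℝ} (ht : 0 < t) (f : Lp ℂ 2 (wMeasure s)) :
    ‖opL s ht f‖ = t ^ (-s) * ‖f‖ := by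
  rw [opL, LinearMap.coe_mk, AddHom.coe_mk, Lp.norm_toLp,
    eLpNorm_comp_mul ht (Lp.aestronglyMeasurable f), ENNReal.toReal_mul,
    ENNReal.toReal_ofReal (by positivity), Lp.norm_def]

noncomputable def op (s : ℝ) {t : ℝ} (ht : 0 < t) :
    Lp ℂ 2 (wMeasure s) →L[ℂ] Lp ℂ 2 (wMeasure s) :=
  LinearMap.mkContinuous (opL s ht) (t ^ (-s))
    (fun f => le_of_eq (opL_norm s ht f))

lemma op_apply (s : ℝ) {t : ℝ} (ht : 0 < t) (f : Lp ℂ 2 (wMeasure s)) :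
    op s ht f =ᵐ[wMeasure s] fun x => f (t * x) :=
  MemLp.coeFn_toLp (memLp_comp_mul ht (Lp.memLp f))

lemma op_norm_apply (s : ℝ) {t : ℝ} (ht : 0 < t) (f : Lp ℂ 2 (wMeasure s)) :
    ‖op s ht f‖ = t ^ (-s) * ‖f‖ := opL_norm s ht f

lemma op_norm (s : ℝ) {t : ℝ} (ht : 0 < t) : ‖op s ht‖ ≤ t ^ (-s) :=
  LinearMap.mkContinuous_norm_le _ (by positivity) _

lemma op_mul (s : ℝ) {t u : ℝ} (ht : 0 < t) (hu : 0 < u) :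
    op s ht * op s hu = op s (mul_pos ht hu) := by
  ext f
  have h0 := (qmp ht).ae_eq_comp (op_apply s hu f)
  simp only [Function.comp_def] at h0
  rw [ContinuousLinearMap.mul_apply]
  filter_upwards [op_apply s ht (op s hu f), h0,
    op_apply s (mul_pos ht hu) f] with x h1 h2 h3
  rw [h1, h2, h3]
  ring_nf

lemma op_one (s : ℝ) : op s (one_pos : (0:ℝ) < 1) = 1 := by
  ext f
  filter_upwards [op_apply s one_pos f] with x h1
  show (op s one_pos f : ℝ → ℂ) x = f x
  rw [h1, one_mul]

end ZetaEulerAux3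

namespace ZetaEulerAux4
open ZetaEulerAux ZetaEulerAux2 ZetaEulerAux3

lemma op_eq_of_eq (s : ℝ) {t u : ℝ} (h : t = u) (ht : 0 < t) (hu : 0 < u) :
    op s ht = op s hu := by subst h; rfl

noncomputable def Dfun (s : ℝ) : ℕ → (Lp ℂ 2 (wMeasure s) →L[ℂ] Lp ℂ 2 (wMeasure s)) :=
  fun n => if h : 0 < n then op s (by exact_mod_cast h : (0:ℝ) < (n:ℝ)) else 0

lemma Dfun_pos (s : ℝ) {n : ℕ} (hn : 0 < n) :
    Dfun s n = op s (by exact_mod_cast hn : (0:ℝ) < (n:ℝ)) := by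
  simp [Dfun, hn]

lemma Dfun_zero (s : ℝ) : Dfun s 0 = 0 := by simp [Dfun]

lemma Dfun_one (s : ℝ) : Dfun s 1 = 1 := by
  rw [Dfun_pos s Nat.one_pos, op_eq_of_eq s (by norm_num) _ one_pos, op_one]

lemma Dfun_mul (s : ℝ) (m n : ℕ) : Dfun s (m * n) = Dfun s m * Dfun s n := by
  rcases Nat.eq_zero_or_pos m with hm | hm
  · simp [hm, Dfun_zero]
  rcases Nat.eq_zero_or_pos n with hn | hn
  · simp [hn, Dfun_zero]
  rw [Dfun_pos s hm, Dfun_pos s hn, Dfun_pos s (mul_pos hm hn), op_mul]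
  apply op_eq_of_eq
  push_cast
  ring

lemma Dfun_commute (s : ℝ) (m n : ℕ) : Commute (Dfun s m) (Dfun s n) := by
  unfold Commute SemiconjBy
  rw [← Dfun_mul, ← Dfun_mul, mul_comm m n]

lemma Dfun_norm_le (s : ℝ) {n : ℕ} (hn : 0 < n) : ‖Dfun s n‖ ≤ (n : ℝ) ^ (-s) := by
  rw [Dfun_pos s hn]; exact op_norm s _

lemma Dfun_norm_le' {s : ℝ} (hs : 0 < s) (n : ℕ) : ‖Dfun s n‖ ≤ (n : ℝ) ^ (-s) := by
  rcases Nat.eq_zero_or_pos n with hn | hn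
  · simp [hn, Dfun_zero, Real.zero_rpow (by linarith : -s ≠ 0)]
  · exact Dfun_norm_le s hn

lemma summable_Dfun {s : ℝ} (hs : 1 < s) : Summable (fun n : ℕ => ‖Dfun s n‖) := by
  refine Summable.of_nonneg_of_le (fun n => norm_nonneg _) (Dfun_norm_le' (by linarith)) ?_
  exact Real.summable_nat_rpow.mpr (by linarith)

noncomputable def Asub (s : ℝ) :
    Subalgebra ℂ (Lp ℂ 2 (wMeasure s) →L[ℂ] Lp ℂ 2 (wMeasure s)) :=
  (Algebra.adjoin ℂ (Set.range (Dfun s))).topologicalClosure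

lemma Asub_comm (s : ℝ) (x y : ↥(Asub s)) : x * y = y * x := by
  have key : ∀ a ∈ Algebra.adjoin ℂ (Set.range (Dfun s)),
      ∀ b ∈ Algebra.adjoin ℂ (Set.range (Dfun s)), a * b = b * a := by
    intro a ha b hb
    induction ha, hb using Algebra.adjoin_induction₂ with
    | mem_mem u v hu hv =>
        obtain ⟨m, rfl⟩ := hu; obtain ⟨n, rfl⟩ := hv; exact Dfun_commute s m n
    | algebraMap_both r₁ r₂ => exact (Algebra.commutes r₁ _)
    | algebraMap_left r b hb => exact (Algebra.commutes r b)
    | algebraMap_right r b hb => exact (Algebra.commutes r b).symm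
    | add_left a b c ha hb hc h1 h2 => rw [add_mul, mul_add, h1, h2]
    | add_right a b c ha hb hc h1 h2 => rw [add_mul, mul_add, h1, h2]
    | mul_left a b c ha hb hc h1 h2 =>
        rw [mul_assoc, h2, ← mul_assoc, h1, mul_assoc]
    | mul_right a b c ha hb hc h1 h2 =>
        rw [← mul_assoc, h1, mul_assoc, h2, ← mul_assoc]
  set SA : Set (Lp ℂ 2 (wMeasure s) →L[ℂ] Lp ℂ 2 (wMeasure s)) :=
    SetLike.coe (Algebra.adjoin ℂ (Set.range (Dfun s))) with hSA
  have hx : (x : Lp ℂ 2 (wMeasure s) →L[ℂ] Lp ℂ 2 (wMeasure s)) ∈ closure SA := by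
    have := x.2
    unfold Asub at this
    rwa [← SetLike.mem_coe, Subalgebra.topologicalClosure_coe] at this
  have hy : (y : Lp ℂ 2 (wMeasure s) →L[ℂ] Lp ℂ 2 (wMeasure s)) ∈ closure SA := by
    have := y.2
    unfold Asub at this
    rwa [← SetLike.mem_coe, Subalgebra.topologicalClosure_coe] at this
  have step1 : ∀ b ∈ SA, ∀ a ∈ closure SA, a * b = b * a := by
    intro b hb a ha
    have hsub : closure SA ⊆ {z | z * b = b * z} :=
      closure_minimal (fun z hz => key z hz b hb)
        (isClosed_eq (continuous_id.mul continuous_const)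
          (continuous_const.mul continuous_id))
    exact hsub ha
  have step2 : ∀ b ∈ closure SA, (x : Lp ℂ 2 (wMeasure s) →L[ℂ] Lp ℂ 2 (wMeasure s)) * b
      = b * (x : Lp ℂ 2 (wMeasure s) →L[ℂ] Lp ℂ 2 (wMeasure s)) := by
    intro b hb
    have hsub : closure SA ⊆ {z | (x : Lp ℂ 2 (wMeasure s) →L[ℂ] Lp ℂ 2 (wMeasure s)) * z
        = z * (x : Lp ℂ 2 (wMeasure s) →L[ℂ] Lp ℂ 2 (wMeasure s))} :=
      closure_minimal (fun z hz => step1 z hz _ hx)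
        (isClosed_eq (continuous_const.mul continuous_id)
          (continuous_id.mul continuous_const))
    exact hsub hb
  exact Subtype.ext (step2 _ hy)

noncomputable instance (s : ℝ) : NormedCommRing ↥(Asub s) :=
  { (inferInstance : NormedRing ↥(Asub s)) with mul_comm := Asub_comm s }

instance (s : ℝ) : CompleteSpace ↥(Asub s) :=
  (Subalgebra.isClosed_topologicalClosure _).completeSpace_coe

noncomputable def fA (s : ℝ) (n : ℕ) : ↥(Asub s) :=
  ⟨Dfun s n, Subalgebra.le_topologicalClosure _ (Algebra.subset_adjoin (Set.mem_range_self n))⟩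

lemma fA_norm (s : ℝ) (n : ℕ) : ‖fA s n‖ = ‖Dfun s n‖ := rfl

lemma hasProd_fA {s : ℝ} (hs : 1 < s) :
    HasProd (fun p : Nat.Primes => ∑' e : ℕ, fA s ((p : ℕ) ^ e)) (∑' n : ℕ, fA s n) := by
  refine EulerProduct.eulerProduct_hasProd ?_ (fun {m n} _ => ?_) ?_ ?_
  · exact Subtype.ext (Dfun_one s)
  · exact Subtype.ext (Dfun_mul s m n)
  · exact summable_Dfun hs
  · exact Subtype.ext (Dfun_zero s)

end ZetaEulerAux4

namespace ZetaEulerAux5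
open Filter Topology

lemma coeFn_finsum {E : Type*} [NormedAddCommGroup E] (μ : Measure ℝ)
    (h : ℕ → Lp E 2 μ) (N : ℕ) :
    (↑↑(∑ i ∈ Finset.range N, h i) : ℝ → E)
      =ᵐ[μ] fun x => ∑ i ∈ Finset.range N, (h i : ℝ → E) x := by
  induction N with
  | zero =>
      simp only [Finset.range_zero, Finset.sum_empty]
      exact Lp.coeFn_zero E 2 μ
  | succ N ih =>
      rw [Finset.sum_range_succ]
      filter_upwards [Lp.coeFn_add (∑ i ∈ Finset.range N, h i) (h N), ih] with x h1 h2
      rw [h1, Pi.add_apply, h2, Finset.sum_range_succ]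

lemma exists_subseq_ae_tendsto {E : Type*} [NormedAddCommGroup E] (μ : Measure ℝ)
    {F : ℕ → Lp E 2 μ} {G : Lp E 2 μ} (h : Tendsto F atTop (nhds G)) :
    ∃ ns : ℕ → ℕ, StrictMono ns ∧
      ∀ᵐ x ∂μ, Tendsto (fun i => (F (ns i) : ℝ → E) x) atTop (nhds ((G : ℝ → E) x)) := by
  have h1 : TendstoInMeasure μ (fun N => (F N : ℝ → E)) atTop (G : ℝ → E) := by
    apply tendstoInMeasure_of_tendsto_eLpNorm (p := 2) (by norm_num)
      (fun n => Lp.aestronglyMeasurable _) (Lp.aestronglyMeasurable _)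
    have h2 : ∀ N : ℕ, eLpNorm ((F N : ℝ → E) - (G : ℝ → E)) 2 μ
        = ENNReal.ofReal ‖F N - G‖ := fun N => by
      rw [← eLpNorm_congr_ae (Lp.coeFn_sub (F N) G), Lp.norm_def,
        ENNReal.ofReal_toReal (Lp.eLpNorm_ne_top _)]
    simp_rw [h2]
    have h3 : Tendsto (fun N => ‖F N - G‖) atTop (nhds 0) :=
      tendsto_iff_norm_sub_tendsto_zero.mp h
    have := (ENNReal.continuous_ofReal.tendsto 0).comp h3
    simpa [Function.comp_def] using this
  exact h1.exists_seq_tendsto_ae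

lemma ae_summable_norm (μ : Measure ℝ) (g : ℕ → Lp ℂ 2 μ)
    (hg : Summable fun n => ‖g n‖) :
    ∀ᵐ x ∂μ, Summable fun n => ‖(g n : ℝ → ℂ) x‖ := by
  set h : ℕ → Lp ℝ 2 μ :=
    fun n => ((Lp.memLp (g n)).norm).toLp (fun x => ‖(g n : ℝ → ℂ) x‖) with hh
  have hnorm : ∀ n, ‖h n‖ = ‖g n‖ := fun n => by
    rw [hh, Lp.norm_toLp, eLpNorm_norm, ← Lp.norm_def]
  have hsumh : Summable h := Summable.of_norm (by simpa only [hnorm] using hg)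
  obtain ⟨ns, hns, hae1⟩ := exists_subseq_ae_tendsto μ hsumh.hasSum.tendsto_sum_nat
  have hae2 : ∀ᵐ x ∂μ, ∀ N : ℕ, (↑↑(∑ i ∈ Finset.range N, h i) : ℝ → ℝ) x
      = ∑ i ∈ Finset.range N, (h i : ℝ → ℝ) x :=
    ae_all_iff.mpr fun N => coeFn_finsum μ h N
  have hae3 : ∀ᵐ x ∂μ, ∀ n : ℕ, (h n : ℝ → ℝ) x = ‖(g n : ℝ → ℂ) x‖ :=
    ae_all_iff.mpr fun n => MemLp.coeFn_toLp _
  filter_upwards [hae1, hae2, hae3] with x h1 h2 h3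
  simp only [h2] at h1
  have hmono : Monotone (fun N => ∑ i ∈ Finset.range N, (h i : ℝ → ℝ) x) := by
    intro a b hab
    apply Finset.sum_le_sum_of_subset_of_nonneg (Finset.range_subset_range.mpr hab)
    intro i _ _
    rw [h3 i]; positivity
  refine summable_of_sum_range_le (c := ((∑' n, h n : Lp ℝ 2 μ) : ℝ → ℝ) x)
    (fun n => norm_nonneg _) ?_
  intro N
  have hle : ∑ i ∈ Finset.range N, (h i : ℝ → ℝ) x
      ≤ ((∑' n, h n : Lp ℝ 2 μ) : ℝ → ℝ) x := by
    obtain ⟨i, hi⟩ := (hns.tendsto_atTop).eventually_ge_atTop N |>.exists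
    calc ∑ i ∈ Finset.range N, (h i : ℝ → ℝ) x
        ≤ ∑ j ∈ Finset.range (ns i), (h j : ℝ → ℝ) x := hmono hi
      _ ≤ _ := (hmono.comp hns.monotone).ge_of_tendsto h1 i
  calc ∑ i ∈ Finset.range N, ‖(g i : ℝ → ℂ) x‖
      = ∑ i ∈ Finset.range N, (h i : ℝ → ℝ) x := by
        refine Finset.sum_congr rfl fun i _ => (h3 i).symm
    _ ≤ _ := hle

lemma coeFn_tsum (μ : Measure ℝ) (g : ℕ → Lp ℂ 2 μ)
    (hg : Summable fun n => ‖g n‖) :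
    (↑↑(∑' n, g n) : ℝ → ℂ) =ᵐ[μ] fun x => ∑' n, (g n : ℝ → ℂ) x := by
  have hsumg : Summable g := Summable.of_norm hg
  obtain ⟨ns, hns, hae1⟩ := exists_subseq_ae_tendsto μ hsumg.hasSum.tendsto_sum_nat
  have hae2 : ∀ᵐ x ∂μ, ∀ N : ℕ, (↑↑(∑ i ∈ Finset.range N, g i) : ℝ → ℂ) x
      = ∑ i ∈ Finset.range N, (g i : ℝ → ℂ) x :=
    ae_all_iff.mpr fun N => coeFn_finsum μ g N
  filter_upwards [hae1, hae2, ae_summable_norm μ g hg] with x h1 h2 h3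
  simp only [h2] at h1
  have hsx : Summable fun n => (g n : ℝ → ℂ) x := Summable.of_norm h3
  have h4 : Tendsto (fun N => ∑ i ∈ Finset.range N, (g i : ℝ → ℂ) x) atTop
      (nhds (∑' n, (g n : ℝ → ℂ) x)) := hsx.hasSum.tendsto_sum_nat
  exact tendsto_nhds_unique h1 (h4.comp hns.tendsto_atTop)

end ZetaEulerAux5

open ZetaEulerAux ZetaEulerAux2 ZetaEulerAux3 ZetaEulerAux4 ZetaEulerAux5


/-- Euler product for the Zeta operator: for `s > 1`, on `L²((0,∞), x^{2s} dx/x)` the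
Zeta operator `Z f(x) = ∑_{n≥1} f (n x)` is the product over all primes `p` of the
factors `(1 - λ_p⁻¹)⁻¹ : f ↦ ∑_{e≥0} f (pᵉ x)`, the factors commute, and the product
converges absolutely in operator norm. -/
theorem zetaOperator_euler_product (s : ℝ) (hs : 1 < s) :
    ∃ (TZ : Lp ℂ 2 (wMeasure s) →L[ℂ] Lp ℂ 2 (wMeasure s))
      (F : {p : ℕ // p.Prime} → (Lp ℂ 2 (wMeasure s) →L[ℂ] Lp ℂ 2 (wMeasure s))),
      (∀ f : Lp ℂ 2 (wMeasure s),
        TZ f =ᵐ[wMeasure s] fun x => ∑' n : ℕ+, f (n * x)) ∧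
      (∀ p : {p : ℕ // p.Prime}, ∀ f : Lp ℂ 2 (wMeasure s),
        F p f =ᵐ[wMeasure s] fun x => ∑' e : ℕ, f ((p : ℕ) ^ e * x)) ∧
      Summable (fun p : {p : ℕ // p.Prime} => ‖F p - 1‖) ∧
      ∃ hc : ∀ p q : {p : ℕ // p.Prime}, Commute (F p) (F q),
        Tendsto (fun t : Finset {p : ℕ // p.Prime} =>
            t.noncommProd F (fun a _ b _ _ => hc a b))
          atTop (nhds TZ) := by
  classical
  have hs0 : (0:ℝ) < s := by linarith
  have hDsum := summable_Dfun hs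
  have hA_sum : Summable (fun n : ℕ => ‖fA s n‖) := by
    simpa only [fA_norm] using hDsum
  have hA : Summable (fA s) := Summable.of_norm hA_sum
  have hp2 : ∀ p : {p : ℕ // p.Prime}, (2:ℝ) ≤ ((p:ℕ):ℝ) := fun p => by
    exact_mod_cast p.2.two_le
  have hrle : ∀ p : {p : ℕ // p.Prime}, ((p:ℕ):ℝ) ^ (-s) ≤ 2⁻¹ := by
    intro p
    have h1 : ((p:ℕ):ℝ) ^ (-s) ≤ (2:ℝ) ^ (-s) := by
      rw [Real.rpow_neg (by positivity), Real.rpow_neg (by norm_num)]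
      apply inv_anti₀ (Real.rpow_pos_of_pos (by norm_num) _)
      exact Real.rpow_le_rpow (by norm_num) (hp2 p) hs0.le
    have h2 : (2:ℝ) ^ (-s) ≤ 2⁻¹ := by
      calc (2:ℝ) ^ (-s) ≤ (2:ℝ) ^ (-1:ℝ) :=
            Real.rpow_le_rpow_of_exponent_le (by norm_num) (by linarith)
        _ = 2⁻¹ := by rw [Real.rpow_neg_one]
    linarith
  have hrpos : ∀ p : {p : ℕ // p.Prime}, 0 ≤ ((p:ℕ):ℝ) ^ (-s) := fun p => by positivity
  have hrlt1 : ∀ p : {p : ℕ // p.Prime}, ((p:ℕ):ℝ) ^ (-s) < 1 := fun p =>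
    lt_of_le_of_lt (hrle p) (by norm_num)
  have hcast : ∀ (p : {p : ℕ // p.Prime}) (e : ℕ),
      (((p:ℕ) ^ e : ℕ) : ℝ) ^ (-s) = (((p:ℕ):ℝ) ^ (-s)) ^ e := by
    intro p e
    rw [Nat.cast_pow, ← Real.rpow_natCast (((p:ℕ):ℝ)) e, ← Real.rpow_mul (by positivity),
      mul_comm ((e:ℕ):ℝ) (-s), Real.rpow_mul (by positivity), Real.rpow_natCast]
  have hDpow : ∀ (p : {p : ℕ // p.Prime}) (e : ℕ),
      ‖Dfun s ((p:ℕ) ^ e)‖ ≤ (((p:ℕ):ℝ) ^ (-s)) ^ e := fun p e => by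
    rw [← hcast p e]; exact Dfun_norm_le' hs0 _
  have hfAgeom : ∀ p : {p : ℕ // p.Prime},
      Summable (fun e : ℕ => ‖fA s ((p:ℕ) ^ e)‖) := fun p =>
    Summable.of_nonneg_of_le (fun _ => norm_nonneg _)
      (fun e => by rw [fA_norm]; exact hDpow p e)
      (summable_geometric_of_lt_one (hrpos p) (hrlt1 p))
  have hfAp : ∀ p : {p : ℕ // p.Prime}, Summable (fun e : ℕ => fA s ((p:ℕ) ^ e)) :=
    fun p => Summable.of_norm (hfAgeom p)
  have hval : Continuous (Subtype.val : ↥(Asub s) →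
      (Lp ℂ 2 (wMeasure s) →L[ℂ] Lp ℂ 2 (wMeasure s))) := continuous_subtype_val
  refine ⟨(↑(∑' n : ℕ, fA s n) : Lp ℂ 2 (wMeasure s) →L[ℂ] Lp ℂ 2 (wMeasure s)),
    fun p => (↑(∑' e : ℕ, fA s ((p:ℕ) ^ e)) :
      Lp ℂ 2 (wMeasure s) →L[ℂ] Lp ℂ 2 (wMeasure s)), ?_, ?_, ?_, ?_⟩
  · -- TZ pointwise
    intro f
    have hTZsum : HasSum (fun n : ℕ => Dfun s n)
        (↑(∑' n : ℕ, fA s n) : Lp ℂ 2 (wMeasure s) →L[ℂ] Lp ℂ 2 (wMeasure s)) :=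
      hA.hasSum.map ((Asub s).val) (by exact continuous_subtype_val)
    have happ : HasSum (fun n : ℕ => Dfun s n f)
        ((↑(∑' n : ℕ, fA s n) : Lp ℂ 2 (wMeasure s) →L[ℂ] Lp ℂ 2 (wMeasure s)) f) :=
      hTZsum.map (ContinuousLinearMap.apply ℂ (Lp ℂ 2 (wMeasure s)) f)
        (ContinuousLinearMap.apply ℂ (Lp ℂ 2 (wMeasure s)) f).continuous
    have hnorms : Summable (fun n : ℕ => ‖Dfun s n f‖) :=
      Summable.of_nonneg_of_le (fun _ => norm_nonneg _)
        (fun n => ((Dfun s n).le_opNorm f).trans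
          (mul_le_mul_of_nonneg_right (Dfun_norm_le' hs0 n) (norm_nonneg f)))
        ((Real.summable_nat_rpow.mpr (by linarith)).mul_right ‖f‖)
    have hco := coeFn_tsum (wMeasure s) (fun n => Dfun s n f) hnorms
    have heq : (↑(∑' n : ℕ, fA s n) : Lp ℂ 2 (wMeasure s) →L[ℂ] Lp ℂ 2 (wMeasure s)) f
        = ∑' n : ℕ, Dfun s n f := happ.tsum_eq.symm
    rw [heq]
    have hae : ∀ᵐ x ∂(wMeasure s), ∀ n : ℕ,
        (↑(Dfun s n f) : ℝ → ℂ) x = if h : 0 < n then (f : ℝ → ℂ) ((n:ℝ) * x) else 0 := by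
      rw [ae_all_iff]
      intro n
      by_cases h : 0 < n
      · simp only [h, dif_pos]
        rw [Dfun_pos s h]
        exact op_apply s _ f
      · simp only [h, dif_neg]
        have : Dfun s n f = 0 := by
          rw [show n = 0 by omega, Dfun_zero]; rfl
        rw [this]
        exact Lp.coeFn_zero ℂ 2 (wMeasure s)
    filter_upwards [hco, hae] with x h1 h2
    rw [h1]
    have hinj : Function.Injective (fun n : ℕ+ => (n : ℕ)) := fun a b h => PNat.coe_injective h
    rw [← Function.Injective.tsum_eq hinj (f := fun n : ℕ => (↑(Dfun s n f) : ℝ → ℂ) x) ?_]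
    · apply tsum_congr
      intro b
      rw [h2 (b : ℕ)]
      simp [b.pos]
    · intro n hn
      rcases Nat.eq_zero_or_pos n with h0 | h0
      · exfalso
        apply hn
        have h3 : (↑(Dfun s 0 f) : ℝ → ℂ) x = 0 := by rw [h2 0]; simp
        subst h0
        exact h3
      · exact ⟨⟨n, h0⟩, rfl⟩
  · -- F p pointwise
    intro p f
    have hFsum : HasSum (fun e : ℕ => Dfun s ((p:ℕ) ^ e))
        (↑(∑' e : ℕ, fA s ((p:ℕ) ^ e)) : Lp ℂ 2 (wMeasure s) →L[ℂ] Lp ℂ 2 (wMeasure s)) :=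
      (hfAp p).hasSum.map ((Asub s).val) (by exact continuous_subtype_val)
    have happ : HasSum (fun e : ℕ => Dfun s ((p:ℕ) ^ e) f)
        ((↑(∑' e : ℕ, fA s ((p:ℕ) ^ e)) :
          Lp ℂ 2 (wMeasure s) →L[ℂ] Lp ℂ 2 (wMeasure s)) f) :=
      hFsum.map (ContinuousLinearMap.apply ℂ (Lp ℂ 2 (wMeasure s)) f)
        (ContinuousLinearMap.apply ℂ (Lp ℂ 2 (wMeasure s)) f).continuous
    have hnorms : Summable (fun e : ℕ => ‖Dfun s ((p:ℕ) ^ e) f‖) :=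
      Summable.of_nonneg_of_le (fun _ => norm_nonneg _)
        (fun e => ((Dfun s ((p:ℕ) ^ e)).le_opNorm f).trans
          (mul_le_mul_of_nonneg_right (hDpow p e) (norm_nonneg f)))
        ((summable_geometric_of_lt_one (hrpos p) (hrlt1 p)).mul_right ‖f‖)
    have hco := coeFn_tsum (wMeasure s) (fun e => Dfun s ((p:ℕ) ^ e) f) hnorms
    rw [happ.tsum_eq.symm]
    have hae : ∀ᵐ x ∂(wMeasure s), ∀ e : ℕ,
        (↑(Dfun s ((p:ℕ) ^ e) f) : ℝ → ℂ) x = (f : ℝ → ℂ) (((p:ℕ) ^ e : ℕ) * x) := by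
      rw [ae_all_iff]
      intro e
      have hpe : 0 < (p:ℕ) ^ e := pow_pos p.2.pos e
      rw [Dfun_pos s hpe]
      have := op_apply s (by exact_mod_cast hpe : (0:ℝ) < (((p:ℕ) ^ e : ℕ) : ℝ)) f
      filter_upwards [this] with x hx
      rw [hx]
    filter_upwards [hco, hae] with x h1 h2
    rw [h1]
    apply tsum_congr
    intro e
    rw [h2 e]
    norm_cast
  · -- summability of ‖F p - 1‖
    have hbound : ∀ p : {p : ℕ // p.Prime},
        ‖(↑(∑' e : ℕ, fA s ((p:ℕ) ^ e)) :
          Lp ℂ 2 (wMeasure s) →L[ℂ] Lp ℂ 2 (wMeasure s)) - 1‖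
        ≤ 2 * ((p:ℕ):ℝ) ^ (-s) := by
      intro p
      set r := ((p:ℕ):ℝ) ^ (-s) with hr
      have hFsum : HasSum (fun e : ℕ => Dfun s ((p:ℕ) ^ e))
          (↑(∑' e : ℕ, fA s ((p:ℕ) ^ e)) :
            Lp ℂ 2 (wMeasure s) →L[ℂ] Lp ℂ 2 (wMeasure s)) :=
        (hfAp p).hasSum.map ((Asub s).val) (by exact continuous_subtype_val)
      have hnormsB : Summable (fun e : ℕ => ‖Dfun s ((p:ℕ) ^ e)‖) :=
        Summable.of_nonneg_of_le (fun _ => norm_nonneg _) (fun e => hDpow p e)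
          (summable_geometric_of_lt_one (hrpos p) (hrlt1 p))
      have hsplit : (↑(∑' e : ℕ, fA s ((p:ℕ) ^ e)) :
          Lp ℂ 2 (wMeasure s) →L[ℂ] Lp ℂ 2 (wMeasure s))
          = 1 + ∑' e : ℕ, Dfun s ((p:ℕ) ^ (e + 1)) := by
        rw [← hFsum.tsum_eq, Summable.tsum_eq_zero_add hFsum.summable]
        congr 1
        rw [pow_zero, Dfun_one]
      have hinj1 : Function.Injective (fun e : ℕ => e + 1) := fun a b h => Nat.succ_injective h
      have hnorms1 : Summable (fun e : ℕ => ‖Dfun s ((p:ℕ) ^ (e + 1))‖) :=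
        hnormsB.comp_injective hinj1
      have htail : ‖∑' e : ℕ, Dfun s ((p:ℕ) ^ (e + 1))‖ ≤ 2 * r := by
        have h1 : ‖∑' e : ℕ, Dfun s ((p:ℕ) ^ (e + 1))‖
            ≤ ∑' e : ℕ, ‖Dfun s ((p:ℕ) ^ (e + 1))‖ := norm_tsum_le_tsum_norm hnorms1
        have h2 : ∑' e : ℕ, ‖Dfun s ((p:ℕ) ^ (e + 1))‖ ≤ ∑' e : ℕ, r ^ (e + 1) := by
          apply Summable.tsum_le_tsum (fun e => hDpow p (e + 1)) hnorms1
          exact (summable_geometric_of_lt_one (hrpos p) (hrlt1 p)).comp_injective hinj1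
        have h3 : ∑' e : ℕ, r ^ (e + 1) = (1 - r)⁻¹ * r := by
          simp_rw [pow_succ]
          rw [tsum_mul_right, tsum_geometric_of_lt_one (hrpos p) (hrlt1 p)]
        have h4 : (1 - r)⁻¹ ≤ 2 := by
          rw [inv_le_comm₀ (by have := hrle p; simp only [← hr] at this; linarith) (by norm_num)]
          have := hrle p; simp only [← hr] at this; linarith
        have h5 : (1 - r)⁻¹ * r ≤ 2 * r :=
          mul_le_mul_of_nonneg_right h4 (hrpos p)
        linarith [h1.trans (h2.trans_eq h3)]
      calc ‖(↑(∑' e : ℕ, fA s ((p:ℕ) ^ e)) :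
          Lp ℂ 2 (wMeasure s) →L[ℂ] Lp ℂ 2 (wMeasure s)) - 1‖
          = ‖∑' e : ℕ, Dfun s ((p:ℕ) ^ (e + 1))‖ := by rw [hsplit, add_sub_cancel_left]
        _ ≤ 2 * r := htail
    apply Summable.of_nonneg_of_le (fun _ => norm_nonneg _) hbound
    apply Summable.mul_left
    exact (Real.summable_nat_rpow.mpr (by linarith)).subtype _
  · -- commutation and tendsto
    refine ⟨?_, ?_⟩
    · intro p q
      have h := Asub_comm s (∑' e : ℕ, fA s ((p:ℕ) ^ e)) (∑' e : ℕ, fA s ((q:ℕ) ^ e))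
      have h2 := congrArg Subtype.val h
      exact h2
    · have hprod := hasProd_fA hs
      have ht2 := (hval.tendsto _).comp hprod
      apply ht2.congr
      intro t
      show (Subtype.val (∏ p ∈ t, ∑' e : ℕ, fA s ((p:ℕ) ^ e))) = _
      have hcomm : ((t : Set Nat.Primes)).Pairwise
          (Function.onFun Commute fun p : Nat.Primes => ∑' e : ℕ, fA s ((p:ℕ) ^ e)) :=
        fun a _ b _ _ => mul_comm _ _
      rw [← Finset.noncommProd_eq_prod t (fun p : Nat.Primes => ∑' e : ℕ, fA s ((p:ℕ) ^ e))]
      exact Finset.map_noncommProd t _ hcomm ((Asub s).val)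
end
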